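/- If t R̃ t' (end-agreeable reduction), then t⟦x⟧ R t'[x] for every natural number x, where ⟦·⟧ is the worm-induced fundamental sequence and [·] the standard tree-ordinal fundamental sequence. -/
import Mathlib


/-- Tree ordinals as formal terms: `0`, and `ω^{t₁} + ⋯ + ω^{tₙ}` for tree
ordinals `t₁, …, tₙ` (no ordering condition on the exponents).
`oadd e r` denotes `r + ω^e`, i.e. `e` is the exponent of the **rightmost**
summand and `r` collects the summands to its left. -/
inductive T : Type where
  | zero : T
  | oadd : T → T → T
deriving DecidableEq

namespace T

/-- The induced ordinal `o(t)` of a tree term (ordinal arithmetic, so smaller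
summands may be absorbed). -/
noncomputable def o : T → Ordinal.{0}
  | zero => 0
  | oadd e r => o r + Ordinal.omega0 ^ o e

/-- The norm: `N0 = 0`, `N(ω^α + β) = 1 + Nα + Nβ`. -/
def norm : T → ℕ
  | zero => 0
  | oadd e r => 1 + norm e + norm r

/-- `rep e r x = r + ω^e · x`. -/
def rep (e r : T) : ℕ → T
  | 0 => r
  | x + 1 => oadd e (rep e r x)

/-- The standard fundamental sequences on tree terms:
`0[x] = 0`, `1[x] = 0`, `(t+1)[x] = t`, `(t + ω^{s+1})[x] = t + ω^s · x`,
`(t + ω^λ)[x] = t + ω^{λ[x]}` for a limit term `λ`. -/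
def fund : T → ℕ → T
  | zero, _ => zero
  | oadd zero r, _ => r
  | oadd (oadd zero e') r, x => rep e' r x
  | oadd (oadd (oadd a b) e') r, x => oadd (fund (oadd (oadd a b) e') x) r

/-- Auxiliary sum for the ordinal correction function: `crSum t m` adds
`N(ω^{tᵢ})` for each summand `ω^{tᵢ}` of `t` whose exponent is smaller (as an
ordinal) than some exponent strictly to its right (where `m` is the maximum of
the exponents lying to the right of all of `t`). -/
noncomputable def crSum : T → Ordinal.{0} → ℕ
  | zero, _ => 0
  | oadd e r, m => (if o e < m then 1 + norm e else 0) + crSum r (max m (o e))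

mutual
/-- The ordinal correction function `Cr`:
`Cr(0) = 0` and `Cr(t) = Σ {N(ω^{tᵢ}) : tᵢ < tⱼ for some j > i} + max Cr(tᵢ)`. -/
noncomputable def cr : T → ℕ
  | zero => 0
  | oadd e r => crSum (oadd e r) 0 + max (cr e) (crMax r)

/-- Maximum of `Cr` over the exponents of a term. -/
noncomputable def crMax : T → ℕ
  | zero => 0
  | oadd e r => max (cr e) (crMax r)
end

/-- Cantor normal form predicate: exponents are (weakly) increasing from the
rightmost summand leftwards, and all exponents are themselves in CNF.  Terms
satisfying `NF` faithfully represent the ordinals below `ε₀`. -/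
def NF : T → Prop
  | zero => True
  | oadd e r => NF e ∧ NF r ∧ (match r with | zero => True | oadd f _ => o e ≤ o f)

/-- A term is a limit iff its rightmost summand has nonzero exponent. -/
def IsLim : T → Prop
  | oadd (oadd _ _) _ => True
  | _ => False

/-- Drop rightmost summands with exponent of ordinal value `< b`
(the absorption performed by ordinal addition). -/
noncomputable def cleanup (b : Ordinal.{0}) : T → T
  | zero => zero
  | oadd f s => if o f < b then cleanup b s else oadd f s

/-- Normalization of a tree term to the Cantor normal form of its induced
ordinal: `toNF t` is `NF`, and `o (toNF t) = o t`. -/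
noncomputable def toNF : T → T
  | zero => zero
  | oadd e r => oadd (toNF e) (cleanup (o e) (toNF r))

/-- `repOne r x = r + x`. -/
def repOne (r : T) : ℕ → T
  | 0 => r
  | x + 1 => oadd zero (repOne r x)

/-- `repPair s r x = r + (ω^s + 1) · x`. -/
def repPair (s r : T) : ℕ → T
  | 0 => r
  | x + 1 => oadd zero (oadd s (repPair s r x))

/-- The worm-induced fundamental sequences `⟦·⟧` on tree terms:
`0⟦x⟧ = 0`, `(t+1)⟦x⟧ = t`, `(t+ω)⟦x⟧ = t + x`,
`(t + ω^{s+1})⟦x⟧ = t + (ω^s + 1) · x` for `s ≠ 0`, and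
`(t + ω^λ)⟦x⟧ = t + ω^{λ⟦x⟧}` for a limit term `λ`. -/
def fundW : T → ℕ → T
  | zero, _ => zero
  | oadd zero r, _ => r
  | oadd (oadd zero zero) r, x => repOne r x
  | oadd (oadd zero (oadd a b)) r, x => repPair (oadd a b) r x
  | oadd (oadd (oadd a b) e') r, x => oadd (fundW (oadd (oadd a b) e') x) r

end T

/-- Graph of the Hardy functions (with the standard fundamental sequences):
`H_0(x) = x`, `H_{t+1}(x) = H_t(x+1)`, `H_t(x) = H_{t[x]}(x)` for limit `t`.
`HG t x y` means `H_t(x)` is defined with value `y`. -/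
inductive HG : T → ℕ → ℕ → Prop where
  | zero (x) : HG T.zero x x
  | succ {r x y} : HG r (x + 1) y → HG (T.oadd T.zero r) x y
  | lim {e r x y} (he : e ≠ T.zero) :
      HG (T.fund (T.oadd e r) x) x y → HG (T.oadd e r) x y

/-- The reduction relation `R`: `t R t'` iff `t'` is obtained from `t` by
deleting at most one `+1` summand from each block of `+1`s lying to the right
of some `ω`-summand (the leftmost block `k₋₁` is unchanged), and replacing
each non-unit exponent `tᵢ` by some `t'ᵢ` with `tᵢ R t'ᵢ`. -/
inductive R : T → T → Prop where
  | zero : R T.zero T.zero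
  | unit {t t'} : R t t' → R (T.oadd T.zero t) (T.oadd T.zero t')
  | exp {e e' t t'} (he : e ≠ T.zero) (he' : e' ≠ T.zero) :
      R e e' → R t t' → R (T.oadd e t) (T.oadd e' t')
  | drop {e e' t t'} (he : e ≠ T.zero) (he' : e' ≠ T.zero) :
      R e e' → R t t' → R (T.oadd T.zero (T.oadd e t)) (T.oadd e' t')

/-- The end-agreeable reduction relation `R̃`: as `R`, but no `+1` may be
deleted from the rightmost block `kₙ`, and the rightmost exponents are related
by `R̃` (the remaining ones by `R`). -/
inductive Rt : T → T → Prop where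
  | zero : Rt T.zero T.zero
  | unit {t t'} : Rt t t' → Rt (T.oadd T.zero t) (T.oadd T.zero t')
  | exp {e e' t t'} (he : e ≠ T.zero) (he' : e' ≠ T.zero) :
      Rt e e' → R t t' → Rt (T.oadd e t) (T.oadd e' t')

theorem Rt.toR {t t' : T} (h : Rt t t') : R t t' := by
  induction h with
  | zero => exact R.zero
  | unit _ ih => exact R.unit ih
  | exp he he' _ hr ih => exact R.exp he he' ih hr

theorem R.zero_iff {t t' : T} (h : R t t') : t = T.zero ↔ t' = T.zero := by
  cases h <;> simp

theorem repOne_R {r r' : T} (h : R r r') (x : ℕ) :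
    R (T.repOne r x) (T.rep T.zero r' x) := by
  induction x with
  | zero => exact h
  | succ n ih => exact R.unit ih

theorem repPair_R {s s' r r' : T} (hs : s ≠ T.zero) (hs' : s' ≠ T.zero)
    (h : R s s') (hr : R r r') (x : ℕ) :
    R (T.repPair s r x) (T.rep s' r' x) := by
  induction x with
  | zero => exact hr
  | succ n ih => exact R.drop hs hs' h ih

/-- If `t R̃ t'` (end-agreeable reduction), then
`t⟦x⟧ R t'[x]` for every natural number `x`, where `⟦·⟧` is the worm-induced
fundamental sequence and `[·]` the standard tree-ordinal one. -/
theorem fundW_R_fund {t t' : T} (h : Rt t t') (x : ℕ) :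
    R (T.fundW t x) (T.fund t' x) := by
  induction h with
  | zero => exact R.zero
  | unit h ih => exact Rt.toR h
  | @exp e e' r r' he he' hee hrr ih =>
    match e, he with
    | T.oadd T.zero T.zero, _ =>
      cases hee with
      | unit h1 =>
        cases h1
        exact repOne_R hrr x
      | exp h2 h3 h4 h5 => exact absurd rfl h2
    | T.oadd T.zero (T.oadd a b), _ =>
      cases hee with
      | unit h1 =>
        cases h1 with
        | unit h2 => exact repPair_R (by simp) (by simp) (Rt.toR (Rt.unit h2)) hrr x
        | exp h2 h3 h4 h5 => exact repPair_R (by simp) (by simp) (Rt.toR (Rt.exp h2 h3 h4 h5)) hrr x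
      | exp h2 h3 h4 h5 => exact absurd rfl h2
    | T.oadd (T.oadd a b) c, _ =>
      cases hee with
      | exp hf hf' hff hcc =>
        rename_i f' c'
        match f', hf' with
        | T.oadd a' b', _ =>
          by_cases hz : T.fundW (T.oadd (T.oadd a b) c) x = T.zero
          · rw [show T.fundW (T.oadd (T.oadd (T.oadd a b) c) r) x
                = T.oadd (T.fundW (T.oadd (T.oadd a b) c) x) r from rfl,
                show T.fund (T.oadd (T.oadd (T.oadd a' b') c') r') x
                = T.oadd (T.fund (T.oadd (T.oadd a' b') c') x) r' from rfl,
                hz, (R.zero_iff ih).mp hz]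
            exact R.unit hrr
          · exact R.exp hz (fun hz' => hz ((R.zero_iff ih).mpr hz')) ih hrr
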